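/- arXiv:1201.2545 — 3 statements merged into one kernel-verified Lean document; each statement's English description precedes it below -/
import Mathlib

section
/- Let N(t) = sup{n ≥ 0 : S_n ≤ t} be a general counting process with interarrival times X_1, X_2, … and arrival times S_n = X_1 + ⋯ + X_n, and let T be a DFR nonnegative random time independent of the process, with survival function F̄_T. Fix a natural number n ≥ 1 and assume there exists a distributional version {(Z_{n+1}^x, Z_{n+2}^x) : x ∈ ℝ_+^n} of (X_{n+1}, X_{n+2}) given (X_1, …, X_n) and a set N_n ⊆ ℝ_+^n with P((X_1, …, X_n) ∈ N_n) = 1 such that for every DFR survival function H̄ with H̄(0) = 1 and every x ∈ N_n one has E[H̄(Z_{n+1}^x)]² ≤ E[H̄(Z_{n+1}^x + Z_{n+2}^x)]. Then E[F̄_T(S_{n+1})]² ≤ E[F̄_T(S_n)]·E[F̄_T(S_{n+2})]. -/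
open MeasureTheory ProbabilityTheory

variable {Ω : Type*} [MeasurableSpace Ω]

/-- Survival function of a random variable `T`: `F̄_T(t) = P(T > t)`. -/
noncomputable def surv (μ : Measure Ω) (T : Ω → ℝ) (t : ℝ) : ℝ :=
  (μ {ω | t < T ω}).toReal

/-- `T` has the decreasing failure rate (DFR) property:
`F̄_T(s+z)·F̄_T(t) ≤ F̄_T(t+z)·F̄_T(s)` for all `0 ≤ s ≤ t` and `z ≥ 0`
(log-convexity of the survival function on `[0,∞)`). -/
def IsDFR (μ : Measure Ω) (T : Ω → ℝ) : Prop :=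
  ∀ s t z : ℝ, 0 ≤ s → s ≤ t → 0 ≤ z →
    μ {ω | s + z < T ω} * μ {ω | t < T ω} ≤ μ {ω | t + z < T ω} * μ {ω | s < T ω}

/-- Arrival times: `S n = X 1 + ⋯ + X n` (with 0-based indexing of the
interarrival times, `X i` is the `(i+1)`-st interarrival time), `S 0 = 0`. -/
noncomputable def arr (X : ℕ → Ω → ℝ) (n : ℕ) (ω : Ω) : ℝ :=
  ∑ i ∈ Finset.range n, X i ω

/-- The counting process `N(t) = sup {n ≥ 0 : S n ≤ t}` (valued in `ℕ∞`,
allowing infinitely many arrivals). -/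
noncomputable def countN (X : ℕ → Ω → ℝ) (t : ℝ) (ω : Ω) : ℕ∞ :=
  sSup ((fun n : ℕ => (n : ℕ∞)) '' {n : ℕ | arr X n ω ≤ t})

/-- A (possibly defective) `ℕ∞`-valued random variable `M` is discrete DFR:
`P(M ≥ n+1)² ≤ P(M ≥ n)·P(M ≥ n+2)` for all `n`. -/
def IsdDFR (μ : Measure Ω) (M : Ω → ℕ∞) : Prop :=
  ∀ n : ℕ,
    μ {ω | (n : ℕ∞) + 1 ≤ M ω} ^ 2 ≤
      μ {ω | (n : ℕ∞) ≤ M ω} * μ {ω | (n : ℕ∞) + 2 ≤ M ω}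

/-- An abstract survival function `G : ℝ → ℝ` (restricted to `[0,∞)`) has the
DFR property: `G(s+z)·G(t) ≤ G(t+z)·G(s)` for all `0 ≤ s ≤ t`, `z ≥ 0`. -/
def DFRfun (G : ℝ → ℝ) : Prop :=
  ∀ s t z : ℝ, 0 ≤ s → s ≤ t → 0 ≤ z → G (s + z) * G t ≤ G (t + z) * G s

/-- `G` is a survival function on `[0,∞)`: measurable, decreasing,
with values in `[0,1]`. -/
def IsSurvFun (G : ℝ → ℝ) : Prop :=
  Measurable G ∧ (∀ s t : ℝ, 0 ≤ s → s ≤ t → G t ≤ G s) ∧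
    ∀ t : ℝ, 0 ≤ t → 0 ≤ G t ∧ G t ≤ 1

/- Integrating out `X_{n+1}, X_{n+2}` against the kernel reduces the claim to
`E[f]² ≤ E[g]·E[h]` on the law of `(X_1, …, X_n)`, where, with `a = x_1 + ⋯ + x_n` and
`G = F̄_T`, `g x = G a`, `f x = ∫ G(a + z₁) dκₓ`, `h x = ∫ G(a + z₁ + z₂) dκₓ`. The pointwise
inequality `f² ≤ g·h` is the hypothesis applied to the DFR survival function `u ↦ G(a+u)/G(a)`
(log-convexity survives shifts and scaling), and the integrated one follows from it by
Cauchy–Schwarz. -/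

theorem sq_integral_le_integral_mul_integral {α : Type*} [MeasurableSpace α] {μ : Measure α}
    {f g h : α → ℝ} (hf : Integrable f μ) (hg : Integrable g μ) (hh : Integrable h μ)
    (hg0 : ∀ᵐ x ∂μ, 0 ≤ g x) (hh0 : ∀ᵐ x ∂μ, 0 ≤ h x) (hfgh : ∀ᵐ x ∂μ, f x ^ 2 ≤ g x * h x) :
    (∫ x, f x ∂μ) ^ 2 ≤ (∫ x, g x ∂μ) * ∫ x, h x ∂μ := by
  have hquad : ∀ t : ℝ, 0 ≤ (∫ x, g x ∂μ) * (t * t) + (-2 * ∫ x, f x ∂μ) * t + ∫ x, h x ∂μ := by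
    intro t
    have hpt : ∀ᵐ x ∂μ, 0 ≤ g x * (t * t) + -2 * f x * t + h x := by
      filter_upwards [hg0, hh0, hfgh] with x hgx hhx hx
      rcases hgx.eq_or_lt with hg | hg
      · have hf : f x = 0 := pow_eq_zero_iff two_ne_zero |>.1 <|
          le_antisymm (by simpa [← hg] using hx) (sq_nonneg _)
        simp [hf, ← hg, hhx]
      · -- `g · (g t² - 2 f t + h) = (g t - f)² + (g h - f²)`
        exact (mul_nonneg_iff_of_pos_left hg).1 (by nlinarith [sq_nonneg (g x * t - f x)])
    have hlin : ∫ x, g x * (t * t) + -2 * f x * t + h x ∂μ =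
        (∫ x, g x ∂μ) * (t * t) + (-2 * ∫ x, f x ∂μ) * t + ∫ x, h x ∂μ := by
      rw [integral_add _ hh, integral_add, integral_mul_const, integral_mul_const,
        integral_const_mul]
      exacts [hg.mul_const _, (hf.const_mul _).mul_const _,
        (hg.mul_const _).add ((hf.const_mul _).mul_const _)]
    exact hlin ▸ integral_nonneg_of_ae hpt
  have := discrim_le_zero hquad
  rw [discrim] at this
  linarith

theorem ae_of_ae_imp_of_measure_eq_one {α : Type*} [MeasurableSpace α] {μ : Measure α}
    [IsProbabilityMeasure μ] {s : Set α} {p : α → Prop} (hs : μ s = 1)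
    (hp : NullMeasurableSet {x | p x} μ) (h : ∀ᵐ x ∂μ, x ∈ s → p x) : ∀ᵐ x ∂μ, p x := by
  -- `s` need not be measurable, so `μ s = 1` does not make `s` conull by itself
  refine (ae_iff_measure_eq hp).2 (le_antisymm (measure_mono (Set.subset_univ _)) ?_)
  calc μ Set.univ = μ (s ∩ {x | x ∈ s → p x}) := by rw [measure_inter_conull h, hs, measure_univ]
    _ ≤ μ {x | p x} := measure_mono fun x hx => hx.2 hx.1

section Disintegration

variable {Ω α β : Type*} [MeasurableSpace Ω] [MeasurableSpace α] [MeasurableSpace β]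
  {μ : Measure Ω} [IsFiniteMeasure μ] {Y : Ω → α} {Z : Ω → β} {κ : Kernel α β}
  [IsMarkovKernel κ]

theorem integral_comp_eq_integral_integral_of_map_eq_compProd (hY : Measurable Y)
    (hZ : Measurable Z) (hκ : μ.map (fun ω => (Y ω, Z ω)) = (μ.map Y).compProd κ)
    {F : α × β → ℝ} (hFm : Measurable F) {C : ℝ} (hC : ∀ q, ‖F q‖ ≤ C) :
    ∫ ω, F (Y ω, Z ω) ∂μ = ∫ x, ∫ z, F (x, z) ∂κ x ∂(μ.map Y) := by
  rw [← integral_map (hY.prodMk hZ).aemeasurable hFm.aestronglyMeasurable, hκ,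
    Measure.integral_compProd (.of_bound hFm.aestronglyMeasurable C (ae_of_all _ hC))]

theorem ae_ae_of_forall_of_map_eq_compProd (hY : Measurable Y) (hZ : Measurable Z)
    (hκ : μ.map (fun ω => (Y ω, Z ω)) = (μ.map Y).compProd κ) {p : α × β → Prop}
    (hp : MeasurableSet {q | p q}) (h : ∀ ω, p (Y ω, Z ω)) :
    ∀ᵐ x ∂(μ.map Y), ∀ᵐ z ∂κ x, p (x, z) :=
  Measure.ae_ae_of_ae_compProd <| hκ ▸ (ae_map_iff (hY.prodMk hZ).aemeasurable hp).2
    (ae_of_all _ h)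

end Disintegration

theorem integrable_integral_kernel_of_bound {α β : Type*} [MeasurableSpace α]
    [MeasurableSpace β] {ν : Measure α} [IsFiniteMeasure ν] {κ : Kernel α β} [IsMarkovKernel κ]
    {F : α × β → ℝ} (hF : Measurable F) {C : ℝ} (hC : ∀ q, ‖F q‖ ≤ C) :
    Integrable (fun x => ∫ z, F (x, z) ∂κ x) ν :=
  .of_bound hF.stronglyMeasurable.integral_kernel_prod_right'.aestronglyMeasurable C
    (ae_of_all _ fun x => by
      simpa using norm_integral_le_of_norm_le_const (μ := κ x) (ae_of_all _ fun z => hC (x, z)))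

section SurvivalFunction

variable {G : ℝ → ℝ}

theorem DFRfun.shift_div (hG : DFRfun G) {a : ℝ} (ha : 0 ≤ a) (c : ℝ) :
    DFRfun fun u => G (a + u) / c := by
  intro s t z hs hst hz
  simp only [div_mul_div_comm, ← add_assoc]
  exact div_le_div_of_nonneg_right (hG (a + s) (a + t) z (by linarith) (by linarith) hz)
    (mul_self_nonneg c)

theorem isSurvFun_shift_div (hGm : Measurable G) (hGanti : Antitone G) (hG0 : ∀ t, 0 ≤ G t)
    {a : ℝ} (hGa : 0 < G a) : IsSurvFun fun u => G (a + u) / G a := by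
  refine ⟨by fun_prop, fun s t _ hst => ?_, fun t ht => ⟨div_nonneg (hG0 _) hGa.le, ?_⟩⟩
  · exact div_le_div_of_nonneg_right (hGanti (by linarith)) hGa.le
  · exact div_le_one_of_le₀ (hGanti (le_add_of_nonneg_right ht)) hGa.le

theorem sq_integral_shift_le {ρ : Measure (ℝ × ℝ)} (hGm : Measurable G) (hGanti : Antitone G)
    (hG0 : ∀ t, 0 ≤ G t) (hG : DFRfun G) {a : ℝ} (ha : 0 ≤ a) (hρ : ∀ᵐ p ∂ρ, 0 ≤ p.1)
    (hcond : ∀ H : ℝ → ℝ, IsSurvFun H → H 0 = 1 → DFRfun H →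
      (∫ p, H p.1 ∂ρ) ^ 2 ≤ ∫ p, H (p.1 + p.2) ∂ρ) :
    (∫ p, G (a + p.1) ∂ρ) ^ 2 ≤ G a * ∫ p, G (a + p.1 + p.2) ∂ρ := by
  rcases (hG0 a).eq_or_lt with hGa | hGa
  · have hzero : ∫ p, G (a + p.1) ∂ρ = 0 := integral_eq_zero_of_ae <| by
      filter_upwards [hρ] with p hp
      exact le_antisymm ((hGanti (le_add_of_nonneg_right hp)).trans hGa.ge) (hG0 _)
    simp [hzero, ← hGa]
  · have key := hcond _ (isSurvFun_shift_div hGm hGanti hG0 hGa) (by simp [hGa.ne'])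
      (hG.shift_div ha _)
    simp only [← add_assoc, integral_div] at key
    rw [div_pow, div_le_div_iff₀ (by positivity) hGa, sq (G a), ← mul_assoc] at key
    exact le_of_mul_le_mul_right (by linarith) hGa

theorem sq_integral_kernel_shift_le {α : Type*} [MeasurableSpace α] {ν : Measure α}
    [IsProbabilityMeasure ν] {κ : Kernel α (ℝ × ℝ)} [IsMarkovKernel κ] (hGm : Measurable G)
    (hGanti : Antitone G) (hG0 : ∀ t, 0 ≤ G t) (hG1 : ∀ t, G t ≤ 1) (hG : DFRfun G)
    {A : α → ℝ} (hAm : Measurable A) (hA : ∀ᵐ x ∂ν, 0 ≤ A x)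
    (hκ : ∀ᵐ x ∂ν, ∀ᵐ p ∂κ x, 0 ≤ p.1) {s : Set α} (hs : ν s = 1)
    (hcond : ∀ x ∈ s, ∀ H : ℝ → ℝ, IsSurvFun H → H 0 = 1 → DFRfun H →
      (∫ p, H p.1 ∂(κ x)) ^ 2 ≤ ∫ p, H (p.1 + p.2) ∂(κ x)) :
    (∫ x, ∫ p, G (A x + p.1) ∂κ x ∂ν) ^ 2 ≤
      (∫ x, G (A x) ∂ν) * ∫ x, ∫ p, G (A x + p.1 + p.2) ∂κ x ∂ν := by
  have hGb : ∀ t, ‖G t‖ ≤ 1 := fun t => by rw [Real.norm_of_nonneg (hG0 t)]; exact hG1 t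
  have hf := integrable_integral_kernel_of_bound (ν := ν) (κ := κ)
    (F := fun q => G (A q.1 + q.2.1)) (by fun_prop) fun _ => hGb _
  have hh := integrable_integral_kernel_of_bound (ν := ν) (κ := κ)
    (F := fun q => G (A q.1 + q.2.1 + q.2.2)) (by fun_prop) fun _ => hGb _
  have hg : Integrable (fun x => G (A x)) ν :=
    .of_bound (by fun_prop : Measurable _).aestronglyMeasurable 1
      (ae_of_all _ fun _ => hGb _)
  refine sq_integral_le_integral_mul_integral hf hg hh (ae_of_all _ fun _ => hG0 _)
    (ae_of_all _ fun _ => integral_nonneg fun _ => hG0 _) ?_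
  refine ae_of_ae_imp_of_measure_eq_one hs (nullMeasurableSet_le
    (hf.1.aemeasurable.pow_const 2) (hg.1.aemeasurable.mul hh.1.aemeasurable)) ?_
  filter_upwards [hA, hκ] with x hAx hκx hxs
  exact sq_integral_shift_le hGm hGanti hG0 hG hAx hκx (hcond x hxs)

end SurvivalFunction

theorem antitone_surv (μ : Measure Ω) [IsFiniteMeasure μ] (T : Ω → ℝ) : Antitone (surv μ T) :=
  fun _ _ hst => measureReal_mono fun _ hω => lt_of_le_of_lt hst hω

theorem surv_nonneg (μ : Measure Ω) (T : Ω → ℝ) (t : ℝ) : 0 ≤ surv μ T t :=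
  ENNReal.toReal_nonneg

theorem surv_le_one (μ : Measure Ω) [IsProbabilityMeasure μ] (T : Ω → ℝ) (t : ℝ) :
    surv μ T t ≤ 1 :=
  measureReal_le_one

theorem norm_surv_le_one (μ : Measure Ω) [IsProbabilityMeasure μ] (T : Ω → ℝ) (t : ℝ) :
    ‖surv μ T t‖ ≤ 1 := by
  rw [Real.norm_of_nonneg (surv_nonneg μ T t)]
  exact surv_le_one μ T t

theorem IsDFR.dfrFun_surv {μ : Measure Ω} [IsFiniteMeasure μ] {T : Ω → ℝ} (hT : IsDFR μ T) :
    DFRfun (surv μ T) := fun s t z hs hst hz => by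
  simpa [surv, ENNReal.toReal_mul] using
    ENNReal.toReal_mono (by finiteness) (hT s t z hs hst hz)

theorem stmt3_general
    (μ : Measure Ω) [IsProbabilityMeasure μ]
    (X : ℕ → Ω → ℝ) (T : Ω → ℝ)
    (hXmeas : ∀ m, Measurable (X m)) (hXnonneg : ∀ m ω, 0 ≤ X m ω)
    (hDFR : IsDFR μ T)
    (n : ℕ)
    (κ : ProbabilityTheory.Kernel (Fin n → ℝ) (ℝ × ℝ)) (hκ : IsMarkovKernel κ)
    (hker : μ.map (fun ω => ((fun i : Fin n => X i ω), (X n ω, X (n + 1) ω))) =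
      (μ.map (fun ω => fun i : Fin n => X i ω)).compProd κ)
    (Nn : Set (Fin n → ℝ))
    (hNn : μ {ω | (fun i : Fin n => X i ω) ∈ Nn} = 1)
    (hcond : ∀ x ∈ Nn, ∀ G : ℝ → ℝ, IsSurvFun G → G 0 = 1 → DFRfun G →
      (∫ p, G p.1 ∂(κ x)) ^ 2 ≤ ∫ p, G (p.1 + p.2) ∂(κ x)) :
    (∫ ω, surv μ T (arr X (n + 1) ω) ∂μ) ^ 2 ≤
      (∫ ω, surv μ T (arr X n ω) ∂μ) * (∫ ω, surv μ T (arr X (n + 2) ω) ∂μ) := by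
  have := hκ
  set Y : Ω → Fin n → ℝ := fun ω i => X i ω
  have hY : Measurable Y := measurable_pi_lambda _ fun i => hXmeas i
  have hZ : Measurable fun ω => (X n ω, X (n + 1) ω) := (hXmeas n).prodMk (hXmeas (n + 1))
  have := Measure.isProbabilityMeasure_map (μ := μ) hY.aemeasurable
  have hGm : Measurable (surv μ T) := (antitone_surv μ T).measurable
  have I0 : ∫ ω, surv μ T (arr X n ω) ∂μ = ∫ x, surv μ T (∑ i, x i) ∂(μ.map Y) := by
    simp only [arr, ← Fin.sum_univ_eq_sum_range]
    exact (integral_map (f := fun x => surv μ T (∑ i, x i)) hY.aemeasurable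
      (by fun_prop : Measurable _).aestronglyMeasurable).symm
  have I1 : ∫ ω, surv μ T (arr X (n + 1) ω) ∂μ =
      ∫ x, ∫ p, surv μ T (∑ i, x i + p.1) ∂κ x ∂(μ.map Y) := by
    simp only [arr, Finset.sum_range_succ, ← Fin.sum_univ_eq_sum_range]
    exact integral_comp_eq_integral_integral_of_map_eq_compProd hY hZ hker
      (F := fun q => surv μ T (∑ i, q.1 i + q.2.1)) (by fun_prop) fun _ => norm_surv_le_one μ T _
  have I2 : ∫ ω, surv μ T (arr X (n + 2) ω) ∂μ =
      ∫ x, ∫ p, surv μ T (∑ i, x i + p.1 + p.2) ∂κ x ∂(μ.map Y) := by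
    simp only [arr, Finset.sum_range_succ, ← Fin.sum_univ_eq_sum_range]
    exact integral_comp_eq_integral_integral_of_map_eq_compProd hY hZ hker
      (F := fun q => surv μ T (∑ i, q.1 i + q.2.1 + q.2.2)) (by fun_prop)
      fun _ => norm_surv_le_one μ T _
  rw [I0, I1, I2]
  refine sq_integral_kernel_shift_le hGm (antitone_surv μ T) (surv_nonneg μ T) (surv_le_one μ T)
    hDFR.dfrFun_surv (by fun_prop) ?_ ?_ ?_ hcond
  · exact (ae_map_iff hY.aemeasurable (measurableSet_le measurable_const (by fun_prop))).2
      (ae_of_all _ fun ω => Finset.sum_nonneg fun i _ => hXnonneg i ω)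
  · exact ae_ae_of_forall_of_map_eq_compProd (p := fun q => 0 ≤ q.2.1) hY hZ hker
      (measurableSet_le measurable_const (by fun_prop)) fun ω => hXnonneg n ω
  · exact le_antisymm prob_le_one (hNn ▸ Measure.le_map_apply hY.aemeasurable Nn)

/-- Let `N` be a general counting process with interarrival
times `X 0, X 1, …` (mathematically `X_1, X_2, …`), and `T` a DFR random time
independent of the process. Fix `n ≥ 1`, and suppose there is a distributional
version of `(X_{n+1}, X_{n+2})` given `(X_1, …, X_n)` — encoded as a Markov
kernel `κ` from `ℝⁿ` to `ℝ²` disintegrating the joint law — and a set `Nn` of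
full measure for `(X_1, …, X_n)` such that for every `x ∈ Nn` and every DFR
survival function `G` with `G 0 = 1` one has
`(∫ G(z₁) dκₓ)² ≤ ∫ G(z₁+z₂) dκₓ`. Then
`E[F̄_T(S_{n+1})]² ≤ E[F̄_T(S_n)]·E[F̄_T(S_{n+2})]`. -/
theorem stmt3
    (μ : Measure Ω) [IsProbabilityMeasure μ]
    (X : ℕ → Ω → ℝ) (T : Ω → ℝ)
    (hXmeas : ∀ m, Measurable (X m)) (hXnonneg : ∀ m ω, 0 ≤ X m ω)
    (hXnondeg : ∀ m, μ {ω | X m ω = 0} < 1)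
    (hTmeas : Measurable T) (hTnonneg : ∀ ω, 0 ≤ T ω)
    (hindep : IndepFun T (fun ω m => X m ω) μ)
    (hDFR : IsDFR μ T)
    (n : ℕ) (hn : 1 ≤ n)
    (κ : ProbabilityTheory.Kernel (Fin n → ℝ) (ℝ × ℝ)) (hκ : IsMarkovKernel κ)
    (hker : μ.map (fun ω => ((fun i : Fin n => X i ω), (X n ω, X (n + 1) ω))) =
      (μ.map (fun ω => fun i : Fin n => X i ω)).compProd κ)
    (Nn : Set (Fin n → ℝ))
    (hNn : μ {ω | (fun i : Fin n => X i ω) ∈ Nn} = 1)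
    (hcond : ∀ x ∈ Nn, ∀ G : ℝ → ℝ, IsSurvFun G → G 0 = 1 → DFRfun G →
      (∫ p, G p.1 ∂(κ x)) ^ 2 ≤ ∫ p, G (p.1 + p.2) ∂(κ x)) :
    (∫ ω, surv μ T (arr X (n + 1) ω) ∂μ) ^ 2 ≤
      (∫ ω, surv μ T (arr X n ω) ∂μ) * (∫ ω, surv μ T (arr X (n + 2) ω) ∂μ) :=
  stmt3_general μ X T hXmeas hXnonneg hDFR n κ hκ hker Nn hNn hcond
end

section
/- Let N(t) = sup{n ≥ 0 : S_n ≤ t} be a general counting process with interarrival times X_1, X_2, …, and let T be a nonnegative random time independent of the process. Assume: (a) T is DFR; (b) P(T = 0)·P(X_1 = 0) = 0; (c) (X_1, X_2) is associated and X_2 ≤_ST X_1; (d) for each n = 1, 2, … there exists a distributional version {(Z_{n+1}^x, Z_{n+2}^x) : x ∈ ℝ_+^n} of (X_{n+1}, X_{n+2}) given (X_1, …, X_n) and a set N_n ⊆ ℝ_+^n with P((X_1, …, X_n) ∈ N_n) = 1 such that for every x ∈ N_n the vector (Z_{n+1}^x, Z_{n+2}^x) is associated and Z_{n+2}^x ≤_ST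 Z_{n+1}^x. Then N(T) is d-DFR. -/
/-!
Since `T` is independent of the interarrival times and `N(t) ≥ n ↔ S_n ≤ t`, we have
`P(N(T) ≥ n) = E[G(S_n)]` with `G(u) = P(T ≥ u)`, and the DFR property makes `G` log-convex:
`G(s + z₁) G(s + z₂) ≤ G(s) G(s + z₁ + z₂)` for `s, z₁, z₂ ≥ 0`. Conditionally on
`(X_1, …, X_n)`, write `s = S_n` and `(Z, W) = (X_{n+1}, X_{n+2})`; then
`E[G(s + Z)]² ≤ E[G(s + Z)] E[G(s + W)] ≤ E[G(s + Z) G(s + W)] ≤ G(s) E[G(s + Z + W)]`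
by `W ≤_ST Z`, by association, and by log-convexity. Integrating over `(X_1, …, X_n)` with the
Cauchy–Schwarz inequality gives `P(N(T) ≥ n+1)² ≤ P(N(T) ≥ n) P(N(T) ≥ n+2)`.
-/

open MeasureTheory ProbabilityTheory

variable {Ω : Type*} [MeasurableSpace Ω]

/-- The random vector `(Z, W)` is associated: `Cov(f(Z,W), g(Z,W)) ≥ 0` for all
componentwise increasing `f g : ℝ² → ℝ` for which the covariance exists. -/
def Associated2 {Ω' : Type*} [MeasurableSpace Ω'] (μ : Measure Ω') (Z W : Ω' → ℝ) : Prop :=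
  ∀ f g : ℝ × ℝ → ℝ, Monotone f → Monotone g →
    Integrable (fun ω => f (Z ω, W ω)) μ → Integrable (fun ω => g (Z ω, W ω)) μ →
    Integrable (fun ω => f (Z ω, W ω) * g (Z ω, W ω)) μ →
    (∫ ω, f (Z ω, W ω) ∂μ) * (∫ ω, g (Z ω, W ω) ∂μ) ≤
      ∫ ω, f (Z ω, W ω) * g (Z ω, W ω) ∂μ

/-- Usual stochastic order: `X ≤_ST Y` iff `P(X > t) ≤ P(Y > t)` for all `t`. -/
def StochLE {Ω' : Type*} [MeasurableSpace Ω'] (μ : Measure Ω') (X Y : Ω' → ℝ) : Prop :=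
  ∀ t : ℝ, μ {ω | t < X ω} ≤ μ {ω | t < Y ω}

open Set
open scoped ENNReal

section CountingProcess

variable {X : ℕ → Ω → ℝ}

omit [MeasurableSpace Ω] in
lemma natCast_le_countN_iff (hX : ∀ m ω, 0 ≤ X m ω) {t : ℝ} (ht : 0 ≤ t) (n : ℕ) (ω : Ω) :
    (n : ℕ∞) ≤ countN X t ω ↔ arr X n ω ≤ t := by
  refine ⟨fun h => ?_, fun h => le_sSup ⟨n, h, rfl⟩⟩
  rcases n with _ | n
  · simpa [arr] using ht
  by_contra! hlt
  have harr_mono : Monotone fun n => arr X n ω := fun _ _ hmn =>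
    Finset.sum_le_sum_of_subset_of_nonneg (Finset.range_subset_range.mpr hmn) fun i _ _ => hX i ω
  have hbound : countN X t ω ≤ n := sSup_le <| by
    rintro _ ⟨m, hm, rfl⟩
    by_contra! hnm
    exact (hlt.trans_le (harr_mono (by exact_mod_cast hnm))).not_ge hm
  exact (h.trans hbound).not_gt (by exact_mod_cast n.lt_succ_self)

end CountingProcess

section StochasticOrder

variable {α : Type*} [MeasurableSpace α] {ρ : Measure α} [IsProbabilityMeasure ρ] {A B : α → ℝ}

lemma StochLE.measure_preimage_Iic_le (hst : StochLE ρ B A) (hA : Measurable A)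
    (hB : Measurable B) (c : ℝ) : ρ (A ⁻¹' Iic c) ≤ ρ (B ⁻¹' Iic c) := by
  have hcompl : ∀ C : α → ℝ, C ⁻¹' Iic c = {a | c < C a}ᶜ := fun C => by ext; simp
  rw [hcompl, hcompl, prob_compl_eq_one_sub (measurableSet_lt measurable_const hA),
    prob_compl_eq_one_sub (measurableSet_lt measurable_const hB)]
  exact tsub_le_tsub_left (hst c) 1

/-- A lower set of reals without a greatest element is the directed union of the `Iic q`,
`q` rational in it; this makes the measures of its preimages limits of distribution functions. -/
lemma StochLE.measure_preimage_le_of_isLowerSet (hst : StochLE ρ B A) (hA : Measurable A)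
    (hB : Measurable B) {L : Set ℝ} (hL : IsLowerSet L) : ρ (A ⁻¹' L) ≤ ρ (B ⁻¹' L) := by
  by_cases hmax : ∃ c, IsGreatest L c
  · obtain ⟨c, hcL, hc⟩ := hmax
    have hLc : L = Iic c := Subset.antisymm hc fun x hx => hL hx hcL
    exact hLc ▸ hst.measure_preimage_Iic_le hA hB c
  push Not at hmax
  have hunion : L = ⋃ q : {q : ℚ // (q : ℝ) ∈ L}, Iic (q : ℝ) := by
    refine Subset.antisymm (fun x hx => ?_) (iUnion_subset fun q => fun x hx => hL hx q.2)
    obtain ⟨y, hyL, hxy⟩ : ∃ y ∈ L, x < y := by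
      simpa [IsGreatest, upperBounds, hx] using hmax x
    obtain ⟨q, hxq, hqy⟩ := exists_rat_btwn hxy
    exact mem_iUnion.mpr ⟨⟨q, hL hqy.le hyL⟩, hxq.le⟩
  have hdir : ∀ C : α → ℝ,
      Directed (· ⊆ ·) fun q : {q : ℚ // (q : ℝ) ∈ L} => C ⁻¹' Iic (q : ℝ) :=
    fun C => Monotone.directed_le fun q r hqr =>
      preimage_mono (Iic_subset_Iic.mpr (by exact_mod_cast hqr))
  rw [hunion, preimage_iUnion, preimage_iUnion, (hdir A).measure_iUnion, (hdir B).measure_iUnion]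
  exact iSup_mono fun q => hst.measure_preimage_Iic_le hA hB q

lemma StochLE.lintegral_comp_le_of_antitone (hst : StochLE ρ B A) (hA : Measurable A)
    (hB : Measurable B) {φ : ℝ → ℝ≥0∞} (hφ : Antitone φ) (hφ_top : ∀ u, φ u ≠ ∞) :
    ∫⁻ a, φ (A a) ∂ρ ≤ ∫⁻ a, φ (B a) ∂ρ := by
  have layercake : ∀ C : α → ℝ, Measurable C →
      ∫⁻ a, φ (C a) ∂ρ = ∫⁻ t in Ioi 0, ρ (C ⁻¹' {u | ENNReal.ofReal t < φ u}) := by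
    intro C hC
    rw [lintegral_congr fun a => (ENNReal.ofReal_toReal (hφ_top (C a))).symm,
      lintegral_eq_lintegral_meas_lt ρ (f := fun a => (φ (C a)).toReal)
        (ae_of_all _ fun _ => ENNReal.toReal_nonneg)
        (hφ.measurable.comp hC).ennreal_toReal.aemeasurable]
    refine setLIntegral_congr_fun measurableSet_Ioi fun t ht => ?_
    congr 1
    ext a
    simp [ENNReal.ofReal_lt_iff_lt_toReal (le_of_lt ht) (hφ_top _)]
  rw [layercake A hA, layercake B hB]
  exact lintegral_mono fun t =>
    hst.measure_preimage_le_of_isLowerSet hA hB fun u v hvu hu => hu.trans_le (hφ hvu)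

end StochasticOrder

section Association

variable {α : Type*} [MeasurableSpace α] {ρ : Measure α} [IsProbabilityMeasure ρ]

lemma Associated2.lintegral_mul_le_of_antitone {Z W : α → ℝ} (h : Associated2 ρ Z W)
    (hZ : Measurable Z) (hW : Measurable W) {φ ψ : ℝ → ℝ≥0∞} (hφ : Antitone φ)
    (hψ : Antitone ψ) (hφ1 : ∀ u, φ u ≤ 1) (hψ1 : ∀ u, ψ u ≤ 1) :
    (∫⁻ a, φ (Z a) ∂ρ) * (∫⁻ a, ψ (W a) ∂ρ) ≤ ∫⁻ a, φ (Z a) * ψ (W a) ∂ρ := by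
  have hφZ : Measurable fun a => φ (Z a) := hφ.measurable.comp hZ
  have hψW : Measurable fun a => ψ (W a) := hψ.measurable.comp hW
  have hφψ1 : ∀ a, φ (Z a) * ψ (W a) ≤ 1 := fun a => mul_le_one' (hφ1 _) (hψ1 _)
  have hlt_top : ∀ {x : ℝ≥0∞}, x ≤ 1 → x < ∞ := fun hx => hx.trans_lt ENNReal.one_lt_top
  have hfin : ∀ {F : α → ℝ≥0∞}, (∀ a, F a ≤ 1) → ∫⁻ a, F a ∂ρ ≠ ∞ := fun hF =>
    ((lintegral_mono hF).trans_lt (lintegral_const_lt_top ENNReal.one_ne_top)).ne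
  have hnorm : ∀ {x : ℝ≥0∞}, x ≤ 1 → ‖-x.toReal‖ ≤ 1 := fun hx => by
    simpa using ENNReal.toReal_le_of_le_ofReal zero_le_one (by simpa using hx)
  have key := h (fun p => -(φ p.1).toReal) (fun p => -(ψ p.2).toReal)
    (fun p q hpq => neg_le_neg (ENNReal.toReal_mono (hlt_top (hφ1 _)).ne (hφ hpq.1)))
    (fun p q hpq => neg_le_neg (ENNReal.toReal_mono (hlt_top (hψ1 _)).ne (hψ hpq.2)))
    (.of_bound hφZ.ennreal_toReal.neg.aestronglyMeasurable 1 (ae_of_all _ fun _ => hnorm (hφ1 _)))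
    (.of_bound hψW.ennreal_toReal.neg.aestronglyMeasurable 1 (ae_of_all _ fun _ => hnorm (hψ1 _)))
    (.of_bound (hφZ.ennreal_toReal.neg.mul hψW.ennreal_toReal.neg).aestronglyMeasurable 1
      (ae_of_all _ fun a => by simpa [← ENNReal.toReal_mul] using hnorm (hφψ1 a)))
  simp only [integral_neg, neg_mul_neg, ← ENNReal.toReal_mul] at key
  rw [integral_toReal hφZ.aemeasurable (ae_of_all _ fun _ => hlt_top (hφ1 _)),
    integral_toReal hψW.aemeasurable (ae_of_all _ fun _ => hlt_top (hψ1 _)),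
    integral_toReal (f := fun a => φ (Z a) * ψ (W a)) (hφZ.mul hψW).aemeasurable
      (ae_of_all _ fun a => hlt_top (hφψ1 a)), ← ENNReal.toReal_mul] at key
  exact (ENNReal.toReal_le_toReal (ENNReal.mul_ne_top (hfin fun a => hφ1 (Z a))
    (hfin fun a => hψ1 (W a))) (hfin hφψ1)).mp key

end Association

lemma lintegral_sq_le_of_sq_le_mul {α : Type*} [MeasurableSpace α] {ρ : Measure α}
    {f a b : α → ℝ≥0∞} (ha : AEMeasurable a ρ) (hb : AEMeasurable b ρ)
    (h : ∀ᵐ x ∂ρ, f x ^ 2 ≤ a x * b x) :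
    (∫⁻ x, f x ∂ρ) ^ 2 ≤ (∫⁻ x, a x ∂ρ) * ∫⁻ x, b x ∂ρ := by
  have hsqrt : ∀ x y : ℝ≥0∞, x ^ 2 ≤ y ↔ x ≤ y ^ (2⁻¹ : ℝ) := fun x y => by
    rw [ENNReal.le_rpow_inv_iff two_pos, ENNReal.rpow_two]
  have hhalf : (0 : ℝ) ≤ 2⁻¹ := by norm_num
  rw [hsqrt, ENNReal.mul_rpow_of_nonneg _ _ hhalf]
  calc ∫⁻ x, f x ∂ρ ≤ ∫⁻ x, a x ^ (2⁻¹ : ℝ) * b x ^ (2⁻¹ : ℝ) ∂ρ :=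
        lintegral_mono_ae <| h.mono fun x hx => by
          rwa [hsqrt, ENNReal.mul_rpow_of_nonneg _ _ hhalf] at hx
    _ ≤ _ := ENNReal.lintegral_mul_norm_pow_le ha hb hhalf hhalf (by norm_num)

section SurvivalFunction

variable {μ : Measure Ω} {T : Ω → ℝ}

lemma measure_le_eq_iInf_measure_lt [IsFiniteMeasure μ] (hT : Measurable T) (u : ℝ) :
    μ {ω | u ≤ T ω} = ⨅ k : ℕ, μ {ω | u - 1 / (k + 1) < T ω} := by
  have hsets : {ω | u ≤ T ω} = ⋂ k : ℕ, {ω | u - 1 / (k + 1) < T ω} := by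
    ext ω
    simp only [mem_ofPred_eq, mem_iInter]
    refine ⟨fun h k => by linarith [Nat.one_div_pos_of_nat (α := ℝ) (n := k)], fun h => ?_⟩
    refine le_of_forall_pos_lt_add fun ε hε => ?_
    obtain ⟨k, hk⟩ := exists_nat_one_div_lt hε
    linarith [h k]
  have hanti : Antitone fun k : ℕ => {ω | u - 1 / (k + 1) < T ω} :=
    fun i j hij ω (hω : u - 1 / (j + 1) < T ω) =>
      show u - 1 / (i + 1) < T ω by linarith [Nat.one_div_le_one_div (α := ℝ) hij]
  rw [hsets, hanti.measure_iInter
    (fun _ => (measurableSet_lt measurable_const hT).nullMeasurableSet)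
    ⟨0, measure_ne_top μ _⟩]

/-- The log-convexity of `P(T > ·)` passes to its left limits `P(T ≥ ·)`. -/
lemma IsDFR.measure_le_mul_le [IsFiniteMeasure μ] (hdfr : IsDFR μ T) (hT : Measurable T)
    {s z₁ z₂ : ℝ} (hs : 0 ≤ s) (hz₁ : 0 ≤ z₁) (hz₂ : 0 ≤ z₂) :
    μ {ω | s + z₁ ≤ T ω} * μ {ω | s + z₂ ≤ T ω} ≤
      μ {ω | s ≤ T ω} * μ {ω | s + z₁ + z₂ ≤ T ω} := by
  rcases hz₁.eq_or_lt with rfl | hz₁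
  · simp
  rcases hz₂.eq_or_lt with rfl | hz₂
  · simp [mul_comm]
  have hle_lt : ∀ {u v : ℝ}, v < u → μ {ω | u ≤ T ω} ≤ μ {ω | v < T ω} :=
    fun hvu => measure_mono fun ω hω => hvu.trans_le hω
  calc μ {ω | s + z₁ ≤ T ω} * μ {ω | s + z₂ ≤ T ω}
      ≤ (⨅ k : ℕ, μ {ω | s + z₁ + z₂ - 1 / (k + 1) < T ω}) * μ {ω | s < T ω} := by
        rw [ENNReal.iInf_mul fun h => absurd h (measure_ne_top μ _)]
        refine le_iInf fun k => ?_
        obtain ⟨ε, hε, hεz₁, hεz₂, hεk⟩ : ∃ ε : ℝ, 0 < ε ∧ ε ≤ z₁ ∧ ε ≤ z₂ ∧ 2 * ε ≤ 1 / (k + 1) :=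
          ⟨min (min z₁ z₂) (1 / (k + 1) / 2), by positivity, by grind, by grind,
            by linarith [min_le_right (min z₁ z₂) (1 / ((k : ℝ) + 1) / 2)]⟩
        calc μ {ω | s + z₁ ≤ T ω} * μ {ω | s + z₂ ≤ T ω}
            ≤ μ {ω | s + (z₁ - ε) < T ω} * μ {ω | s + z₂ - ε < T ω} :=
              mul_le_mul' (hle_lt (by linarith)) (hle_lt (by linarith))
          _ ≤ μ {ω | s + z₂ - ε + (z₁ - ε) < T ω} * μ {ω | s < T ω} :=
              hdfr _ _ _ hs (by linarith) (by linarith)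
          _ ≤ μ {ω | s + z₁ + z₂ - 1 / (k + 1) < T ω} * μ {ω | s < T ω} :=
              mul_le_mul' (measure_mono fun ω (hω : _ < T ω) => show _ < T ω by linarith) le_rfl
    _ = μ {ω | s + z₁ + z₂ ≤ T ω} * μ {ω | s < T ω} := by
        rw [measure_le_eq_iInf_measure_lt hT]
    _ ≤ μ {ω | s ≤ T ω} * μ {ω | s + z₁ + z₂ ≤ T ω} := by
        rw [mul_comm]
        exact mul_le_mul' (measure_mono fun ω (hω : s < T ω) => hω.le) le_rfl

lemma measure_le_eq_lintegral_of_indepFun [IsProbabilityMeasure μ] {S : Ω → ℝ}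
    (hS : Measurable S) (hT : Measurable T) (hST : IndepFun S T μ) :
    μ {ω | S ω ≤ T ω} = ∫⁻ ω, μ {ω' | S ω ≤ T ω'} ∂μ := by
  have hle : MeasurableSet {p : ℝ × ℝ | p.1 ≤ p.2} := measurableSet_le measurable_fst measurable_snd
  have hG : Antitone fun u => μ {ω' | u ≤ T ω'} :=
    fun u v huv => measure_mono fun ω (hω : v ≤ T ω) => huv.trans hω
  calc μ {ω | S ω ≤ T ω} = μ.map (fun ω => (S ω, T ω)) {p : ℝ × ℝ | p.1 ≤ p.2} :=
        (Measure.map_apply (hS.prodMk hT) hle).symm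
    _ = ∫⁻ u, μ.map T (Ici u) ∂μ.map S := by
        rw [(indepFun_iff_map_prod_eq_prod_map_map hS.aemeasurable hT.aemeasurable).mp hST,
          Measure.prod_apply hle]
        rfl
    _ = ∫⁻ ω, μ {ω' | S ω ≤ T ω'} ∂μ := by
        simp_rw [Measure.map_apply hT measurableSet_Ici]
        exact lintegral_map hG.measurable hS

end SurvivalFunction

section Conditioning

variable {α : Type*} [MeasurableSpace α] {ρ : Measure α} [IsProbabilityMeasure ρ]

lemma sq_lintegral_le_of_associated_of_stochLE {Z W : α → ℝ} (hassoc : Associated2 ρ Z W)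
    (hst : StochLE ρ W Z) (hZ : Measurable Z) (hW : Measurable W)
    (hZW : ∀ᵐ a ∂ρ, 0 ≤ Z a ∧ 0 ≤ W a) {φ : ℝ → ℝ≥0∞} (hφ : Antitone φ) (hφ1 : ∀ u, φ u ≤ 1)
    (hlc : ∀ z₁ z₂, 0 ≤ z₁ → 0 ≤ z₂ → φ z₁ * φ z₂ ≤ φ 0 * φ (z₁ + z₂)) :
    (∫⁻ a, φ (Z a) ∂ρ) ^ 2 ≤ φ 0 * ∫⁻ a, φ (Z a + W a) ∂ρ :=
  calc (∫⁻ a, φ (Z a) ∂ρ) ^ 2 = (∫⁻ a, φ (Z a) ∂ρ) * ∫⁻ a, φ (Z a) ∂ρ := sq _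
    _ ≤ (∫⁻ a, φ (Z a) ∂ρ) * ∫⁻ a, φ (W a) ∂ρ :=
        mul_le_mul' le_rfl (hst.lintegral_comp_le_of_antitone hZ hW hφ
          fun u => ((hφ1 u).trans_lt ENNReal.one_lt_top).ne)
    _ ≤ ∫⁻ a, φ (Z a) * φ (W a) ∂ρ := hassoc.lintegral_mul_le_of_antitone hZ hW hφ hφ hφ1 hφ1
    _ ≤ ∫⁻ a, φ 0 * φ (Z a + W a) ∂ρ := lintegral_mono_ae (hZW.mono fun _ ha => hlc _ _ ha.1 ha.2)
    _ = φ 0 * ∫⁻ a, φ (Z a + W a) ∂ρ := lintegral_const_mul _ (hφ.measurable.comp (hZ.add hW))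

/-- `N` need not be measurable: `ρ N` is then its outer measure. -/
lemma ae_of_forall_mem_of_measure_eq_one {N : Set α} (hN : ρ N = 1) {p : α → Prop}
    (hp : MeasurableSet {x | p x}) (h : ∀ x ∈ N, p x) : ∀ᵐ x ∂ρ, p x :=
  ae_iff.mpr <| (prob_compl_eq_zero_iff hp).mpr <|
    le_antisymm prob_le_one (hN ▸ measure_mono fun x hx => h x hx)

end Conditioning

lemma sq_lintegral_lintegral_kernel_le {β : Type*} [MeasurableSpace β] {ν : Measure β}
    [IsProbabilityMeasure ν] {κ : Kernel β (ℝ × ℝ)} [IsMarkovKernel κ] {N : Set β} (hN : ν N = 1)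
    (hN_good : ∀ x ∈ N, Associated2 (κ x) Prod.fst Prod.snd ∧ StochLE (κ x) Prod.snd Prod.fst)
    {s : β → ℝ} (hs : Measurable s) (hs0 : ∀ᵐ x ∂ν, 0 ≤ s x)
    (hz0 : ∀ᵐ x ∂ν, ∀ᵐ z ∂κ x, 0 ≤ z.1 ∧ 0 ≤ z.2)
    {G : ℝ → ℝ≥0∞} (hG : Antitone G) (hG1 : ∀ u, G u ≤ 1)
    (hlc : ∀ u z₁ z₂, 0 ≤ u → 0 ≤ z₁ → 0 ≤ z₂ → G (u + z₁) * G (u + z₂) ≤ G u * G (u + z₁ + z₂)) :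
    (∫⁻ x, ∫⁻ z, G (s x + z.1) ∂κ x ∂ν) ^ 2 ≤
      (∫⁻ x, G (s x) ∂ν) * ∫⁻ x, ∫⁻ z, G (s x + (z.1 + z.2)) ∂κ x ∂ν := by
  have hGs : Measurable fun x => G (s x) := hG.measurable.comp hs
  have hH₁ : Measurable fun x => ∫⁻ z, G (s x + z.1) ∂κ x :=
    (show Measurable fun p : β × (ℝ × ℝ) => G (s p.1 + p.2.1) from
      hG.measurable.comp (by fun_prop)).lintegral_kernel_prod_right'
  have hH₂ : Measurable fun x => ∫⁻ z, G (s x + (z.1 + z.2)) ∂κ x :=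
    (show Measurable fun p : β × (ℝ × ℝ) => G (s p.1 + (p.2.1 + p.2.2)) from
      hG.measurable.comp (by fun_prop)).lintegral_kernel_prod_right'
  refine lintegral_sq_le_of_sq_le_mul hGs.aemeasurable hH₂.aemeasurable ?_
  have hquad : MeasurableSet {z : ℝ × ℝ | 0 ≤ z.1 ∧ 0 ≤ z.2} := by measurability
  have hmeas : MeasurableSet {x | (∀ᵐ z ∂κ x, 0 ≤ z.1 ∧ 0 ≤ z.2) → 0 ≤ s x →
      (∫⁻ z, G (s x + z.1) ∂κ x) ^ 2 ≤ G (s x) * ∫⁻ z, G (s x + (z.1 + z.2)) ∂κ x} := by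
    refine .imp ?_ (.imp (measurableSet_le measurable_const hs)
      (measurableSet_le (hH₁.pow_const 2) (hGs.mul hH₂)))
    simp_rw [ae_iff]
    exact κ.measurable_coe hquad.compl (measurableSet_singleton 0)
  have hgood := ae_of_forall_mem_of_measure_eq_one hN hmeas fun x hx hz hs0 => by
    obtain ⟨hassoc, hst⟩ := hN_good x hx
    simpa using sq_lintegral_le_of_associated_of_stochLE hassoc hst measurable_fst measurable_snd
      hz (φ := fun u => G (s x + u)) (fun u v huv => hG (by linarith)) (fun u => hG1 _)
      fun z₁ z₂ hz₁ hz₂ => by simpa [add_assoc] using hlc (s x) z₁ z₂ hs0 hz₁ hz₂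
  filter_upwards [hs0, hz0, hgood] with x hs0 hz0 hx using hx hz0 hs0

lemma sq_lintegral_comp_arr_le_of_compProd {μ : Measure Ω} [IsProbabilityMeasure μ]
    {X : ℕ → Ω → ℝ} (hX : ∀ m, Measurable (X m)) (hX0 : ∀ m ω, 0 ≤ X m ω) {k : ℕ}
    {κ : Kernel (Fin k → ℝ) (ℝ × ℝ)} [IsMarkovKernel κ]
    (hdis : μ.map (fun ω => ((fun i : Fin k => X i ω), (X k ω, X (k + 1) ω))) =
      (μ.map (fun ω => fun i : Fin k => X i ω)).compProd κ)
    {N : Set (Fin k → ℝ)} (hN : μ {ω | (fun i : Fin k => X i ω) ∈ N} = 1)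
    (hN_good : ∀ x ∈ N, Associated2 (κ x) Prod.fst Prod.snd ∧ StochLE (κ x) Prod.snd Prod.fst)
    {G : ℝ → ℝ≥0∞} (hG : Antitone G) (hG1 : ∀ u, G u ≤ 1)
    (hlc : ∀ u z₁ z₂, 0 ≤ u → 0 ≤ z₁ → 0 ≤ z₂ → G (u + z₁) * G (u + z₂) ≤ G u * G (u + z₁ + z₂)) :
    (∫⁻ ω, G (arr X (k + 1) ω) ∂μ) ^ 2 ≤
      (∫⁻ ω, G (arr X k ω) ∂μ) * ∫⁻ ω, G (arr X (k + 2) ω) ∂μ := by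
  set Y : Ω → Fin k → ℝ := fun ω i => X i ω
  have hY : Measurable Y := measurable_pi_lambda _ fun i => hX i
  have hYX : Measurable fun ω => (Y ω, X k ω, X (k + 1) ω) := by fun_prop
  set ν := μ.map Y
  have : IsProbabilityMeasure ν := Measure.isProbabilityMeasure_map hY.aemeasurable
  set s : (Fin k → ℝ) → ℝ := fun x => ∑ i, x i
  have hs : Measurable s := Finset.measurable_sum _ fun i _ => measurable_pi_apply i
  have harr0 : ∀ ω, arr X k ω = s (Y ω) := fun ω => (Fin.sum_univ_eq_sum_range (X · ω) k).symm
  have harr1 : ∀ ω, arr X (k + 1) ω = s (Y ω) + X k ω := fun ω => by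
    rw [← harr0]; exact Finset.sum_range_succ _ _
  have harr2 : ∀ ω, arr X (k + 2) ω = s (Y ω) + (X k ω + X (k + 1) ω) := fun ω => by
    rw [← add_assoc, ← harr1]; exact Finset.sum_range_succ _ _
  have hdisint : ∀ F : (Fin k → ℝ) × (ℝ × ℝ) → ℝ≥0∞, Measurable F →
      ∫⁻ ω, F (Y ω, X k ω, X (k + 1) ω) ∂μ = ∫⁻ x, ∫⁻ z, F (x, z) ∂κ x ∂ν := fun F hF => by
    rw [← lintegral_map hF hYX, hdis, Measure.lintegral_compProd hF]
  simp_rw [harr0, harr1, harr2]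
  rw [← lintegral_map (f := fun x => G (s x)) (hG.measurable.comp hs) hY,
    hdisint (fun p => G (s p.1 + p.2.1)) (hG.measurable.comp (by fun_prop)),
    hdisint (fun p => G (s p.1 + (p.2.1 + p.2.2))) (hG.measurable.comp (by fun_prop))]
  refine sq_lintegral_lintegral_kernel_le (le_antisymm prob_le_one
    (hN ▸ Measure.le_map_apply hY.aemeasurable N)) hN_good hs ?_ ?_ hG hG1 hlc
  · exact (ae_map_iff hY.aemeasurable (measurableSet_le measurable_const hs)).mpr
      (ae_of_all _ fun ω => Finset.sum_nonneg fun i _ => hX0 i ω)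
  · refine Measure.ae_ae_of_ae_compProd
      (p := fun p : (Fin k → ℝ) × (ℝ × ℝ) => 0 ≤ p.2.1 ∧ 0 ≤ p.2.2) ?_
    rw [← hdis, ae_map_iff hYX.aemeasurable (by measurability)]
    exact ae_of_all _ fun ω => ⟨hX0 k ω, hX0 (k + 1) ω⟩

theorem stmt4_general
    (μ : Measure Ω) [IsProbabilityMeasure μ]
    (X : ℕ → Ω → ℝ) (T : Ω → ℝ)
    (hXmeas : ∀ m, Measurable (X m)) (hXnonneg : ∀ m ω, 0 ≤ X m ω)
    (hTmeas : Measurable T) (hTnonneg : ∀ ω, 0 ≤ T ω)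
    (hindep : IndepFun T (fun ω m => X m ω) μ)
    (ha : IsDFR μ T)
    (hc : Associated2 μ (X 0) (X 1) ∧ StochLE μ (X 1) (X 0))
    (hd : ∀ n : ℕ, 1 ≤ n →
      ∃ κ : ProbabilityTheory.Kernel (Fin n → ℝ) (ℝ × ℝ), IsMarkovKernel κ ∧
        μ.map (fun ω => ((fun i : Fin n => X i ω), (X n ω, X (n + 1) ω))) =
          (μ.map (fun ω => fun i : Fin n => X i ω)).compProd κ ∧
        ∃ Nn : Set (Fin n → ℝ),
          μ {ω | (fun i : Fin n => X i ω) ∈ Nn} = 1 ∧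
          ∀ x ∈ Nn,
            Associated2 (κ x) Prod.fst Prod.snd ∧
            StochLE (κ x) Prod.snd Prod.fst) :
    IsdDFR μ (fun ω => countN X (T ω) ω) := by
  set G : ℝ → ℝ≥0∞ := fun u => μ {ω | u ≤ T ω}
  have hG : Antitone G := fun u v huv => measure_mono fun ω (hω : v ≤ T ω) => huv.trans hω
  have hG1 : ∀ u, G u ≤ 1 := fun _ => prob_le_one
  have hlc : ∀ s z₁ z₂ : ℝ, 0 ≤ s → 0 ≤ z₁ → 0 ≤ z₂ →
      G (s + z₁) * G (s + z₂) ≤ G s * G (s + z₁ + z₂) :=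
    fun _ _ _ => ha.measure_le_mul_le hTmeas
  have hlaw : ∀ m : ℕ, μ {ω | (m : ℕ∞) ≤ countN X (T ω) ω} = ∫⁻ ω, G (arr X m ω) ∂μ := by
    intro m
    simp_rw [natCast_le_countN_iff hXnonneg (hTnonneg _)]
    have hsum : Measurable fun x : ℕ → ℝ => ∑ i ∈ Finset.range m, x i :=
      Finset.measurable_sum _ fun i _ => measurable_pi_apply i
    exact measure_le_eq_lintegral_of_indepFun (hsum.comp (measurable_pi_lambda _ hXmeas)) hTmeas
      (hindep.symm.comp hsum measurable_id)
  intro n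
  rw [show (n : ℕ∞) + 1 = (n + 1 : ℕ) by norm_cast, show (n : ℕ∞) + 2 = (n + 2 : ℕ) by norm_cast,
    hlaw, hlaw, hlaw]
  rcases n with _ | k
  · simpa [arr, Finset.sum_range_succ] using
      sq_lintegral_le_of_associated_of_stochLE hc.1 hc.2 (hXmeas 0) (hXmeas 1)
        (ae_of_all _ fun ω => ⟨hXnonneg 0 ω, hXnonneg 1 ω⟩) hG hG1
        fun z₁ z₂ => by simpa using hlc 0 z₁ z₂ le_rfl
  · obtain ⟨κ, hκ, hdis, N, hN, hN_good⟩ := hd (k + 1) k.succ_pos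
    exact sq_lintegral_comp_arr_le_of_compProd hXmeas hXnonneg hdis hN hN_good hG hG1 hlc

/-- main theorem. Let `N` be a general counting process with
interarrival times `X 0, X 1, …` (mathematically `X_1, X_2, …`), and `T` a
nonnegative random time independent of the process. Assume: (a) `T` is DFR;
(b) `P(T = 0)·P(X_1 = 0) = 0`; (c) `(X_1, X_2)` is associated and
`X_2 ≤_ST X_1`; (d) for each `n ≥ 1` there is a distributional version of
`(X_{n+1}, X_{n+2})` given `(X_1, …, X_n)` — encoded as a Markov kernel `κ`
disintegrating the joint law — and a set `Nn` of full measure for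
`(X_1, …, X_n)` such that for every `x ∈ Nn` the conditional vector is
associated and its second coordinate is stochastically dominated by the first.
Then `N(T)` is d-DFR. -/
theorem stmt4
    (μ : Measure Ω) [IsProbabilityMeasure μ]
    (X : ℕ → Ω → ℝ) (T : Ω → ℝ)
    (hXmeas : ∀ m, Measurable (X m)) (hXnonneg : ∀ m ω, 0 ≤ X m ω)
    (hXnondeg : ∀ m, μ {ω | X m ω = 0} < 1)
    (hTmeas : Measurable T) (hTnonneg : ∀ ω, 0 ≤ T ω)
    (hindep : IndepFun T (fun ω m => X m ω) μ)
    (ha : IsDFR μ T)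
    (hb : μ {ω | T ω = 0} * μ {ω | X 0 ω = 0} = 0)
    (hc : Associated2 μ (X 0) (X 1) ∧ StochLE μ (X 1) (X 0))
    (hd : ∀ n : ℕ, 1 ≤ n →
      ∃ κ : ProbabilityTheory.Kernel (Fin n → ℝ) (ℝ × ℝ), IsMarkovKernel κ ∧
        μ.map (fun ω => ((fun i : Fin n => X i ω), (X n ω, X (n + 1) ω))) =
          (μ.map (fun ω => fun i : Fin n => X i ω)).compProd κ ∧
        ∃ Nn : Set (Fin n → ℝ),
          μ {ω | (fun i : Fin n => X i ω) ∈ Nn} = 1 ∧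
          ∀ x ∈ Nn,
            Associated2 (κ x) Prod.fst Prod.snd ∧
            StochLE (κ x) Prod.snd Prod.fst) :
    IsdDFR μ (fun ω => countN X (T ω) ω) :=
  stmt4_general μ X T hXmeas hXnonneg hTmeas hTnonneg hindep ha hc hd
end

section
/- Let Y_1, Y_2, … be a sequence of independent nonnegative random variables with P(Y_1 > 0) = 1, and define interarrival times X_n = 1/(Y_1 + ⋯ + Y_n), n = 1, 2, …, with associated counting process N(t) = sup{n ≥ 0 : X_1 + ⋯ + X_n ≤ t}. If T is a DFR nonnegative random variable independent of the process, then N(T) is d-DFR. -/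
open MeasureTheory ProbabilityTheory

variable {Ω : Type*} [MeasurableSpace Ω]

/-!
By independence, `P(N(T) ≥ m) = P(S_m ≤ T) = E[Ḡ(S_m)]` with `Ḡ(a) = P(T ≥ a)`. The interarrival
times `1 / (Y_1 + ⋯ + Y_n)` decrease, so applying the DFR inequality with `s = S_n`,
`t = S_{n+1}`, `z = X_{n+1} ≤ X_n` gives `Ḡ(S_{n+1})² ≤ Ḡ(S_n) Ḡ(S_{n+2})` pointwise, and
Cauchy–Schwarz carries this to the expectations.
-/

open Filter Topology Set
open scoped ENNReal

section Survival

variable {μ : Measure Ω} {T : Ω → ℝ}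

lemma antitone_measure_le : Antitone fun a : ℝ => μ {ω | a ≤ T ω} :=
  fun _ _ hab => measure_mono fun _ hω => hab.trans hω

lemma tendsto_measure_sub_lt [IsFiniteMeasure μ] (hT : Measurable T) (a : ℝ) :
    Tendsto (fun ε => μ {ω | a - ε < T ω}) (𝓝[>] 0) (𝓝 (μ {ω | a ≤ T ω})) := by
  have hlim := tendsto_measure_biInter_gt (μ := μ) (s := fun ε => {ω | a - ε < T ω}) (a := 0)
    (fun _ _ => (hT measurableSet_Ioi).nullMeasurableSet)
    (fun _ _ _ hij _ hω => by simp only [mem_ofPred_eq] at hω ⊢; linarith)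
    ⟨1, one_pos, measure_ne_top _ _⟩
  have hinter : ⋂ ε > 0, {ω | a - ε < T ω} = {ω | a ≤ T ω} := by
    ext ω
    simp only [mem_ofPred_eq, mem_iInter]
    refine ⟨fun h => le_of_forall_pos_lt_add fun ε hε => ?_, fun h ε hε => by linarith⟩
    linarith [h ε hε]
  rwa [hinter] at hlim

/-- The closed tails are reached from the open ones in `IsDFR` by letting the shifts `ε / 2`
tend to `0`. -/
theorem IsDFR.sq_measure_le_mul [IsFiniteMeasure μ] (hDFR : IsDFR μ T) (hT : Measurable T)
    {a x y : ℝ} (ha : 0 ≤ a) (hy : 0 ≤ y) (hyx : y ≤ x) :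
    μ {ω | a + x ≤ T ω} ^ 2 ≤ μ {ω | a ≤ T ω} * μ {ω | a + x + y ≤ T ω} := by
  rcases hy.eq_or_lt with rfl | hy
  · rw [sq, add_zero]
    exact mul_le_mul_left (antitone_measure_le (by linarith)) _
  refine ge_of_tendsto (ENNReal.Tendsto.const_mul (tendsto_measure_sub_lt hT (a + x + y))
    (Or.inr (measure_ne_top _ _))) ?_
  filter_upwards [Ioo_mem_nhdsGT hy] with ε ⟨hε, hεy⟩
  calc μ {ω | a + x ≤ T ω} ^ 2
      ≤ μ {ω | a + (y - ε / 2) < T ω} * μ {ω | a + x - ε / 2 < T ω} := by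
        rw [sq]
        gcongr <;> linarith
    _ ≤ μ {ω | a + x - ε / 2 + (y - ε / 2) < T ω} * μ {ω | a < T ω} :=
        hDFR _ _ _ ha (by linarith) (by linarith)
    _ ≤ μ {ω | a ≤ T ω} * μ {ω | a + x + y - ε < T ω} := by
        rw [mul_comm]
        gcongr
        · exact le_of_lt
        · linarith

end Survival

lemma lintegral_sq_le_mul_of_ae_sq_le {α : Type*} [MeasurableSpace α] {ν : Measure α}
    {f g h : α → ℝ≥0∞} (hg : AEMeasurable g ν) (hh : AEMeasurable h ν)
    (hfgh : ∀ᵐ x ∂ν, f x ^ 2 ≤ g x * h x) :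
    (∫⁻ x, f x ∂ν) ^ 2 ≤ (∫⁻ x, g x ∂ν) * ∫⁻ x, h x ∂ν := by
  have hsqrt : ∀ u : ℝ≥0∞, (u ^ (1 / 2 : ℝ)) ^ 2 = u := fun u => by
    rw [← ENNReal.rpow_natCast, ← ENNReal.rpow_mul]; norm_num
  have hf : ∀ᵐ x ∂ν, f x ≤ g x ^ (1 / 2 : ℝ) * h x ^ (1 / 2 : ℝ) := by
    filter_upwards [hfgh] with x hx
    rw [← ENNReal.pow_le_pow_left_iff two_ne_zero, mul_pow, hsqrt, hsqrt]
    exact hx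
  calc (∫⁻ x, f x ∂ν) ^ 2
      ≤ ((∫⁻ x, g x ∂ν) ^ (1 / 2 : ℝ) * (∫⁻ x, h x ∂ν) ^ (1 / 2 : ℝ)) ^ 2 := by
        gcongr
        exact (lintegral_mono_ae hf).trans
          (ENNReal.lintegral_mul_norm_pow_le hg hh (by norm_num) (by norm_num) (by norm_num))
    _ = (∫⁻ x, g x ∂ν) * ∫⁻ x, h x ∂ν := by rw [mul_pow, hsqrt, hsqrt]

theorem ProbabilityTheory.IndepFun.measure_le_eq_lintegral {μ : Measure Ω} [IsFiniteMeasure μ]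
    {W T : Ω → ℝ} (h : IndepFun T W μ) (hW : Measurable W) (hT : Measurable T) :
    μ {ω | W ω ≤ T ω} = ∫⁻ ω, μ {ω' | W ω ≤ T ω'} ∂μ := by
  have hset : MeasurableSet {p : ℝ × ℝ | p.2 ≤ p.1} := measurableSet_le measurable_snd measurable_fst
  calc μ {ω | W ω ≤ T ω} = μ.map (fun ω => (T ω, W ω)) {p | p.2 ≤ p.1} :=
        (Measure.map_apply (hT.prodMk hW) hset).symm
    _ = (μ.map T).prod (μ.map W) {p | p.2 ≤ p.1} := by
        rw [(indepFun_iff_map_prod_eq_prod_map_map hT.aemeasurable hW.aemeasurable).mp h]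
    _ = ∫⁻ w, μ.map T (Ici w) ∂(μ.map W) := Measure.prod_apply_symm hset
    _ = ∫⁻ ω, μ {ω' | W ω ≤ T ω'} ∂μ :=
        (lintegral_congr fun w => Measure.map_apply hT measurableSet_Ici).trans
          (lintegral_map antitone_measure_le.measurable hW)

section Counting

variable {α : Type*} {X : ℕ → α → ℝ} {ω : α}

lemma arr_nonneg (hX : ∀ n, 0 ≤ X n ω) (m : ℕ) : 0 ≤ arr X m ω :=
  Finset.sum_nonneg fun i _ => hX i

lemma monotone_arr (hX : ∀ n, 0 ≤ X n ω) : Monotone fun m => arr X m ω :=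
  monotone_nat_of_le_succ fun m => by
    simp only [arr, Finset.sum_range_succ]
    linarith [hX m]

lemma arr_succ (m : ℕ) : arr X (m + 1) ω = arr X m ω + X m ω :=
  Finset.sum_range_succ _ _

lemma natCast_le_countN {m : ℕ} {t : ℝ} (h : arr X m ω ≤ t) : (m : ℕ∞) ≤ countN X t ω :=
  le_sSup ⟨m, h, rfl⟩

lemma natCast_add_one_le_countN_iff (hX : ∀ n, 0 ≤ X n ω) (k : ℕ) (t : ℝ) :
    (k : ℕ∞) + 1 ≤ countN X t ω ↔ arr X (k + 1) ω ≤ t := by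
  rw [ENat.add_one_le_iff (ENat.natCast_ne_top k), countN, lt_sSup_iff]
  simp only [mem_image, mem_ofPred_eq, exists_exists_and_eq_and, Nat.cast_lt]
  exact ⟨fun ⟨j, hj, hkj⟩ => (monotone_arr hX hkj).trans hj, fun h => ⟨k + 1, h, k.lt_succ_self⟩⟩

end Counting

theorem isdDFR_countN_of_antitone (μ : Measure Ω) [IsFiniteMeasure μ] (X : ℕ → Ω → ℝ)
    (T : Ω → ℝ) (hXmeas : ∀ n, Measurable (X n)) (hXnonneg : ∀ n ω, 0 ≤ X n ω)
    (hXanti : ∀ᵐ ω ∂μ, Antitone fun n => X n ω) (hTmeas : Measurable T)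
    (hindep : IndepFun T (fun ω n => X n ω) μ) (hDFR : IsDFR μ T) :
    IsdDFR μ (fun ω => countN X (T ω) ω) := by
  intro n
  set G : ℝ → ℝ≥0∞ := fun a => μ {ω | a ≤ T ω}
  have harr_meas : ∀ m, Measurable (arr X m) := fun m =>
    Finset.measurable_sum _ fun i _ => hXmeas i
  have hlaw : ∀ m, μ {ω | arr X m ω ≤ T ω} = ∫⁻ ω, G (arr X m ω) ∂μ := fun m =>
    (hindep.comp measurable_id (Finset.measurable_sum (Finset.range m)
      fun i _ => measurable_pi_apply i)).measure_le_eq_lintegral (harr_meas m) hTmeas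
  have hlogconvex : ∀ᵐ ω ∂μ, G (arr X (n + 1) ω) ^ 2 ≤ G (arr X n ω) * G (arr X (n + 2) ω) := by
    filter_upwards [hXanti] with ω hω
    rw [arr_succ (m := n + 1), arr_succ]
    exact hDFR.sq_measure_le_mul hTmeas (arr_nonneg (hXnonneg · ω) n) (hXnonneg (n + 1) ω)
      (hω n.le_succ)
  have hG_meas : ∀ m, AEMeasurable (fun ω => G (arr X m ω)) μ := fun m =>
    (antitone_measure_le.measurable.comp (harr_meas m)).aemeasurable
  have hsucc : ∀ m : ℕ,
      {ω | (m : ℕ∞) + 1 ≤ countN X (T ω) ω} = {ω | arr X (m + 1) ω ≤ T ω} := fun m => by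
    ext ω
    exact natCast_add_one_le_countN_iff (hXnonneg · ω) m (T ω)
  have htwo : (n : ℕ∞) + 2 = ((n + 1 : ℕ) : ℕ∞) + 1 := by push_cast; ring
  simp only [htwo]
  rw [hsucc, hsucc]
  calc μ {ω | arr X (n + 1) ω ≤ T ω} ^ 2
      ≤ (∫⁻ ω, G (arr X n ω) ∂μ) * ∫⁻ ω, G (arr X (n + 2) ω) ∂μ := by
        rw [hlaw]
        exact lintegral_sq_le_mul_of_ae_sq_le (hG_meas n) (hG_meas (n + 2)) hlogconvex
    _ ≤ μ {ω | (n : ℕ∞) ≤ countN X (T ω) ω} * μ {ω | arr X (n + 1 + 1) ω ≤ T ω} := by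
        rw [← hlaw, ← hlaw]
        gcongr
        exact natCast_le_countN

lemma antitone_inv_partialSum {v : ℕ → ℝ} (h0 : 0 < v 0) (hv : ∀ i, 0 ≤ v i) :
    Antitone fun n => (∑ i ∈ Finset.range (n + 1), v i)⁻¹ := by
  refine antitone_nat_of_succ_le fun n => inv_anti₀ ?_ ?_
  · exact h0.trans_le (Finset.single_le_sum (fun i _ => hv i) (by simp))
  · rw [Finset.sum_range_succ _ (n + 1)]
    linarith [hv (n + 1)]

theorem stmt10_general
    (μ : Measure Ω) [IsProbabilityMeasure μ]
    (Y : ℕ → Ω → ℝ) (T : Ω → ℝ)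
    (hYmeas : ∀ n, Measurable (Y n)) (hYnonneg : ∀ n ω, 0 ≤ Y n ω)
    (hY0pos : μ {ω | 0 < Y 0 ω} = 1)
    (hTmeas : Measurable T)
    (hindep : IndepFun T (fun ω n => Y n ω) μ)
    (hDFR : IsDFR μ T) :
    IsdDFR μ (fun ω =>
      countN (fun n ω' => (∑ i ∈ Finset.range (n + 1), Y i ω')⁻¹) (T ω) ω) := by
  have hY0pos_ae : ∀ᵐ ω ∂μ, 0 < Y 0 ω :=
    (ae_iff_measure_eq ((hYmeas 0) measurableSet_Ioi).nullMeasurableSet).mpr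
      (by rw [measure_univ]; exact hY0pos)
  have hinterarrival_meas : Measurable fun (v : ℕ → ℝ) (n : ℕ) =>
      (∑ i ∈ Finset.range (n + 1), v i)⁻¹ := by
    fun_prop
  refine isdDFR_countN_of_antitone μ _ T (fun n => by fun_prop)
    (fun n ω => inv_nonneg.mpr (Finset.sum_nonneg fun i _ => hYnonneg i ω)) ?_ hTmeas
    (hindep.comp measurable_id hinterarrival_meas) hDFR
  filter_upwards [hY0pos_ae] with ω hω
  exact antitone_inv_partialSum hω (hYnonneg · ω)

/-- Let `Y 0, Y 1, …` be independent nonnegative random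
variables with `P(Y_1 > 0) = 1`, and define interarrival times
`X n = 1 / (Y 0 + ⋯ + Y n)` (mathematically `X_n = 1/(Y_1 + ⋯ + Y_n)`),
with counting process `N`. If `T` is a DFR nonnegative random time independent
of the process, then `N(T)` is d-DFR. -/
theorem stmt10
    (μ : Measure Ω) [IsProbabilityMeasure μ]
    (Y : ℕ → Ω → ℝ) (T : Ω → ℝ)
    (hYmeas : ∀ n, Measurable (Y n)) (hYnonneg : ∀ n ω, 0 ≤ Y n ω)
    (hY0pos : μ {ω | 0 < Y 0 ω} = 1)
    (hYindep : iIndepFun Y μ)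
    (hTmeas : Measurable T) (hTnonneg : ∀ ω, 0 ≤ T ω)
    (hindep : IndepFun T (fun ω n => Y n ω) μ)
    (hDFR : IsDFR μ T) :
    IsdDFR μ (fun ω =>
      countN (fun n ω' => (∑ i ∈ Finset.range (n + 1), Y i ω')⁻¹) (T ω) ω) :=
  stmt10_general μ Y T hYmeas hYnonneg hY0pos hTmeas hindep hDFR
end
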